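/- arXiv:1801.09401 — 2 statements merged into one kernel-verified Lean document; each statement's English description precedes it below -/
import Mathlib

section
/- Let (e, γ) and (e', γ') be actual events with e(n) ≤ e'(n) for every n ∈ ℕ⁺, and let p, p' ∈ ℝ be the limits of the sequences n ↦ Φ(e)(γ(n)) and n ↦ Φ(e')(γ'(n)) respectively. Then p ≤ p'. -/
/-- A potential event: a sequence of `0`s and `1`s indexed by positive naturals
(the value at `0` is irrelevant). -/
def IsPotential (e : ℕ → ℕ) : Prop := ∀ n, 1 ≤ n → e n ≤ 1

/-- The frequency (rate of success) `Φ(e)(n) = (∑_{i=1}^n e(i)) / n`. -/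
def freq (e : ℕ → ℕ) (n : ℕ) : ℚ := (∑ i ∈ Finset.Icc 1 n, (e i : ℚ)) / (n : ℚ)

/-- `(e, γ)` is an actual event: `γ : ℕ⁺ → ℕ⁺` is strictly increasing and
`|Φ(e)(γ(n)+i) − Φ(e)(γ(n)+j)| ≤ 1/n` for all `n ∈ ℕ⁺`, `i j ∈ ℕ`. -/
def IsActual (e : ℕ → ℕ) (γ : ℕ → ℕ) : Prop :=
  (∀ n, 1 ≤ n → 1 ≤ γ n) ∧
  (∀ m n, 1 ≤ m → m < n → γ m < γ n) ∧
  (∀ n, 1 ≤ n → ∀ i j : ℕ, |freq e (γ n + i) - freq e (γ n + j)| ≤ 1 / (n : ℚ))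


lemma freq_mono {e e' : ℕ → ℕ} (hle : ∀ n, 1 ≤ n → e n ≤ e' n) (m : ℕ) :
    freq e m ≤ freq e' m := by
  unfold freq
  gcongr with i hi
  exact_mod_cast hle i (Finset.mem_Icc.mp hi).1

lemma IsActual.abs_freq_sub_le {e γ : ℕ → ℕ} (h : IsActual e γ) {n m : ℕ} (hn : 1 ≤ n)
    (hm : γ n ≤ m) : |freq e (γ n) - freq e m| ≤ 1 / (n : ℚ) := by
  simpa [Nat.add_sub_cancel' hm] using h.2.2 n hn 0 (m - γ n)

/-- Both frequencies are within `1/n` of their values at the common later time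
`max (γ n) (γ' n)`, where they are ordered. -/
lemma IsActual.freq_le_add {e e' γ γ' : ℕ → ℕ} (h : IsActual e γ) (h' : IsActual e' γ')
    (hle : ∀ n, 1 ≤ n → e n ≤ e' n) {n : ℕ} (hn : 1 ≤ n) :
    freq e (γ n) ≤ freq e' (γ' n) + 2 / n := by
  set m := max (γ n) (γ' n)
  have hclose := abs_le.mp (h.abs_freq_sub_le hn (le_max_left (γ n) (γ' n)))
  have hclose' := abs_le.mp (h'.abs_freq_sub_le hn (le_max_right (γ n) (γ' n)))
  have hmono := freq_mono hle m
  have htwo : (2 : ℚ) / n = 1 / n + 1 / n := by ring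
  linarith

lemma le_of_tendsto_of_le_add_const_div {a b : ℕ → ℝ} {p q c : ℝ}
    (ha : Filter.Tendsto a Filter.atTop (nhds p)) (hb : Filter.Tendsto b Filter.atTop (nhds q))
    (hab : ∀ᶠ n in Filter.atTop, a n ≤ b n + c / n) : p ≤ q := by
  have hb' : Filter.Tendsto (fun n : ℕ => b n + c / n) Filter.atTop (nhds q) := by
    simpa using hb.add (tendsto_const_div_atTop_nhds_zero_nat c)
  exact le_of_tendsto_of_tendsto ha hb' hab

theorem stmt6_general (e e' γ γ' : ℕ → ℕ)
    (h : IsActual e γ) (h' : IsActual e' γ') (p p' : ℝ)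
    (hp : Filter.Tendsto (fun n => (freq e (γ n) : ℝ)) Filter.atTop (nhds p))
    (hp' : Filter.Tendsto (fun n => (freq e' (γ' n) : ℝ)) Filter.atTop (nhds p'))
    (hle : ∀ n, 1 ≤ n → e n ≤ e' n) :
    p ≤ p' := by
  refine le_of_tendsto_of_le_add_const_div (c := 2) hp hp' ?_
  filter_upwards [Filter.eventually_ge_atTop 1] with n hn
  have := (Rat.cast_le (K := ℝ)).mpr (h.freq_le_add h' hle hn)
  push_cast at this
  exact this

theorem stmt6 (e e' γ γ' : ℕ → ℕ) (he : IsPotential e) (he' : IsPotential e')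
    (h : IsActual e γ) (h' : IsActual e' γ') (p p' : ℝ)
    (hp : Filter.Tendsto (fun n => (freq e (γ n) : ℝ)) Filter.atTop (nhds p))
    (hp' : Filter.Tendsto (fun n => (freq e' (γ' n) : ℝ)) Filter.atTop (nhds p'))
    (hle : ∀ n, 1 ≤ n → e n ≤ e' n) :
    p ≤ p' :=
  stmt6_general e e' γ γ' h h' p p' hp hp' hle
end

section
/- Let (e, γ) be an actual event and let e⁺ be the shifted potential event defined by e⁺(1) = 0 and e⁺(n+1) = e(n) for n ∈ ℕ⁺. Then (e⁺, n ↦ γ(3n) + 1) is an actual event, and the sequence n ↦ Φ(e⁺)(γ(3n)+1) converges to the same real number as the sequence n ↦ Φ(e)(γ(n)). -/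
/-!
Shifting a sequence by one place changes its frequency at `m + 1` only by the factor
`m / (m + 1)`, i.e. by at most `1 / (m + 1)`. Since `γ n ≥ n`, at the indices `γ (3n)` this
error is at most `1 / (3n)`, so the `1 / (3n)`-oscillation of `e` after `γ (3n)` becomes an
oscillation of at most `3 · 1 / (3n) = 1 / n` for the shifted sequence, and the shifted limit
agrees with the original one, which exists because `n ↦ Φ(e)(γ n)` is Cauchy.
-/

open Filter Topology

section Shift

variable {e e' : ℕ → ℕ}

lemma IsPotential.sum_le (he : IsPotential e) (n : ℕ) :
    ∑ i ∈ Finset.Icc 1 n, (e i : ℚ) ≤ n :=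
  calc ∑ i ∈ Finset.Icc 1 n, (e i : ℚ) ≤ ∑ _i ∈ Finset.Icc 1 n, (1 : ℚ) :=
        Finset.sum_le_sum fun i hi => by exact_mod_cast he i (Finset.mem_Icc.mp hi).1
    _ = n := by simp

lemma freq_nonneg (e : ℕ → ℕ) (n : ℕ) : 0 ≤ freq e n := by
  unfold freq; positivity

lemma IsPotential.freq_le_one (he : IsPotential e) (n : ℕ) : freq e n ≤ 1 :=
  div_le_one_of_le₀ (he.sum_le n) (Nat.cast_nonneg n)

variable (h1 : e' 1 = 0) (hs : ∀ n, 1 ≤ n → e' (n + 1) = e n)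
include h1 hs

lemma sum_Icc_succ_eq_of_shift (m : ℕ) :
    ∑ i ∈ Finset.Icc 1 (m + 1), e' i = ∑ i ∈ Finset.Icc 1 m, e i := by
  induction m with
  | zero => simp [h1]
  | succ k ih =>
    rw [Finset.sum_Icc_succ_top (by omega : 1 ≤ k + 1 + 1) e',
      Finset.sum_Icc_succ_top (by omega : 1 ≤ k + 1) e, ih, hs (k + 1) (by omega)]

lemma freq_succ_of_shift (m : ℕ) : freq e' (m + 1) = m / (m + 1) * freq e m := by
  rcases m.eq_zero_or_pos with rfl | hm
  · simp [freq, h1]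
  simp only [freq, ← Nat.cast_sum, sum_Icc_succ_eq_of_shift h1 hs]
  push_cast
  field_simp

lemma abs_freq_succ_sub_le_of_shift (he : IsPotential e) (m : ℕ) :
    |freq e' (m + 1) - freq e m| ≤ 1 / (m + 1) := by
  have hm : (0 : ℚ) < m + 1 := by positivity
  have hdiff : freq e' (m + 1) - freq e m = -(freq e m / (m + 1)) := by
    rw [freq_succ_of_shift h1 hs]
    field_simp
    ring
  rw [hdiff, abs_neg, abs_of_nonneg (div_nonneg (freq_nonneg e m) hm.le)]
  exact div_le_div_of_nonneg_right (he.freq_le_one m) hm.le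

end Shift

namespace IsActual

variable {e γ : ℕ → ℕ} (h : IsActual e γ)
include h

lemma apply_le_apply {m n : ℕ} (hm : 1 ≤ m) (hmn : m ≤ n) : γ m ≤ γ n :=
  hmn.eq_or_lt.elim (fun heq => heq ▸ le_rfl) fun hlt => (h.2.1 m n hm hlt).le

lemma le_apply (n : ℕ) : n ≤ γ n := by
  induction n with
  | zero => exact Nat.zero_le _
  | succ k ih =>
    rcases k.eq_zero_or_pos with rfl | hk
    · exact h.1 1 le_rfl
    · exact (ih.trans_lt (h.2.1 k (k + 1) hk k.lt_succ_self)).succ_le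

lemma abs_freq_sub_le_s10 {N n : ℕ} (hN : 1 ≤ N) (hn : N ≤ n) :
    |freq e (γ n) - freq e (γ N)| ≤ 1 / N := by
  have := h.2.2 N hN (γ n - γ N) 0
  rwa [Nat.add_sub_cancel' (h.apply_le_apply hN hn), add_zero] at this

lemma cauchySeq_freq : CauchySeq fun n => (freq e (γ n) : ℝ) := by
  rw [Metric.cauchySeq_iff']
  intro ε hε
  obtain ⟨N, hN⟩ := exists_nat_one_div_lt hε
  refine ⟨N + 1, fun n hn => ?_⟩
  have hle : ((|freq e (γ n) - freq e (γ (N + 1))| : ℚ) : ℝ) ≤ ((1 / (N + 1 : ℕ) : ℚ) : ℝ) := by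
    exact_mod_cast h.abs_freq_sub_le_s10 (by omega) hn
  push_cast at hle
  rw [Real.dist_eq]
  exact hle.trans_lt hN

lemma shift {e' : ℕ → ℕ} (he : IsPotential e) (h1 : e' 1 = 0)
    (hs : ∀ n, 1 ≤ n → e' (n + 1) = e n) : IsActual e' fun n => γ (3 * n) + 1 := by
  refine ⟨fun n _ => Nat.le_add_left 1 _,
    fun m n hm hmn => Nat.succ_lt_succ (h.2.1 (3 * m) (3 * n) (by omega) (by omega)),
    fun n hn i j => ?_⟩
  have hshift (k : ℕ) :
      |freq e' (γ (3 * n) + 1 + k) - freq e (γ (3 * n) + k)| ≤ 1 / (3 * n) := by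
    rw [add_right_comm]
    refine (abs_freq_succ_sub_le_of_shift h1 hs he _).trans
      (one_div_le_one_div_of_le (by positivity) ?_)
    have := h.le_apply (3 * n)
    exact_mod_cast (by omega : 3 * n ≤ γ (3 * n) + k + 1)
  have hγ := h.2.2 (3 * n) (by omega) i j
  have hi := hshift i
  have hj := hshift j
  have hthird : 3 * (1 / (3 * n : ℚ)) = 1 / n := by field_simp
  push_cast at hγ
  rw [abs_le] at hγ hi hj ⊢
  constructor <;> linarith [hγ.1, hγ.2, hi.1, hi.2, hj.1, hj.2]

end IsActual

theorem stmt10 (e e' γ : ℕ → ℕ) (he : IsPotential e) (h : IsActual e γ)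
    (hshift0 : e' 1 = 0) (hshift : ∀ n, 1 ≤ n → e' (n + 1) = e n) :
    IsActual e' (fun n => γ (3 * n) + 1) ∧
    ∃ p : ℝ,
      Filter.Tendsto (fun n => (freq e (γ n) : ℝ)) Filter.atTop (nhds p) ∧
      Filter.Tendsto (fun n => (freq e' (γ (3 * n) + 1) : ℝ)) Filter.atTop (nhds p) := by
  obtain ⟨p, hp⟩ := cauchySeq_tendsto_of_complete h.cauchySeq_freq
  refine ⟨h.shift he hshift0 hshift, p, hp, ?_⟩
  have h3 : Tendsto (fun n => (freq e (γ (3 * n)) : ℝ)) atTop (𝓝 p) :=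
    hp.comp (tendsto_atTop_mono (fun n => Nat.le_mul_of_pos_left n three_pos) tendsto_id)
  refine h3.congr_dist (squeeze_zero (fun _ => dist_nonneg) (fun n => ?_)
    tendsto_one_div_add_atTop_nhds_zero_nat)
  have hle : ((|freq e' (γ (3 * n) + 1) - freq e (γ (3 * n))| : ℚ) : ℝ) ≤
      ((1 / (γ (3 * n) + 1) : ℚ) : ℝ) := by
    exact_mod_cast abs_freq_succ_sub_le_of_shift hshift0 hshift he _
  push_cast at hle
  rw [Real.dist_eq, abs_sub_comm]
  refine hle.trans (one_div_le_one_div_of_le (by positivity) ?_)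
  have := h.le_apply (3 * n)
  exact_mod_cast (by omega : n + 1 ≤ γ (3 * n) + 1)
end
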